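/- arXiv:1203.0631 — 3 statements merged into one kernel-verified Lean document; each statement's English description precedes it below -/
import Mathlib

section
/- Hypercube expansion: Let f : Bool^n → Bool depend on all n of its variables, and suppose there exists a relevance hypercube for a p-element subset u of the variables. Then for every q with p ≤ q ≤ n there exists a q-element subset w of the variables with u ⊆ w such that f has a relevance hypercube for w. -/
/-!
Fix a hypercube `p` for `u ≠ univ` and view `c ↦ Restrict f u c` as a function of the values
outside `u`. It is not constant: otherwise `f = Restrict f u p` would ignore the variables
outside `u`. Walking from `p` to a point where it differs, one coordinate at a time, we find
`c` with `Restrict f u c = Restrict f u p` such that flipping a single coordinate `j` of `c`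
changes the projection. Then `j ∉ u`, and `c` is a hypercube for `insert j u`: the old
variables still matter because the `j`-slice through `c` is the old projection, and `j`
matters by the choice of `c`. Induction on `q` finishes the proof.
-/

/-- A Boolean function `f` depends on variable `i`. -/
def BoolDependsOn {ι : Type*} (f : (ι → Bool) → Bool) (i : ι) : Prop :=
  ∃ a b : ι → Bool, (∀ j, j ≠ i → a j = b j) ∧ f a ≠ f b

/-- The projection of `f` obtained by fixing all variables outside `S`
to the values given by `p`. -/
def Restrict {n : ℕ} (f : (Fin n → Bool) → Bool) (S : Finset (Fin n))
    (p : Fin n → Bool) : (Fin n → Bool) → Bool :=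
  fun x => f fun j => if j ∈ S then x j else p j

/-- `p` determines a relevance hypercube for `S`: the induced projection
depends on every variable of `S`. -/
def IsRelHypercube {n : ℕ} (f : (Fin n → Bool) → Bool) (S : Finset (Fin n))
    (p : Fin n → Bool) : Prop :=
  ∀ i ∈ S, BoolDependsOn (Restrict f S p) i

open Function Finset

theorem exists_update_ne_of_ne {ι β α : Type*} [DecidableEq ι] [Finite ι]
    (G : (ι → β) → α) {a b : ι → β} (hab : G a ≠ G b) :
    ∃ c j v, G c = G a ∧ G (update c j v) ≠ G c := by
  have := Fintype.ofFinite ι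
  suffices ∀ s : Finset ι, ∀ a, (∀ j ∉ s, a j = b j) → G a ≠ G b →
      ∃ c j v, G c = G a ∧ G (update c j v) ≠ G c from
    this univ a (fun j hj => absurd (mem_univ j) hj) hab
  intro s
  induction s using Finset.induction_on with
  | empty =>
    intro a hagree hne
    exact absurd (congrArg G (funext fun j => hagree j (notMem_empty j))) hne
  | @insert j s _ ih =>
    intro a hagree hne
    by_cases hstep : G (update a j (b j)) = G a
    · have hagree' : ∀ k ∉ s, update a j (b j) k = b k := by
        intro k hk
        rcases eq_or_ne k j with rfl | hkj
        · exact update_self ..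
        · rw [update_of_ne hkj]
          exact hagree k (by simp [hkj, hk])
      obtain ⟨c, k, v, hc, hcv⟩ := ih _ hagree' (hstep ▸ hne)
      exact ⟨c, k, v, hc.trans hstep, hcv⟩
    · exact ⟨a, j, b j, rfl, hstep⟩

section Restrict

variable {n : ℕ} (f : (Fin n → Bool) → Bool) {S : Finset (Fin n)}

theorem restrict_self (x : Fin n → Bool) : Restrict f S x x = f x := by
  simp [Restrict]

theorem restrict_congr {p p' : Fin n → Bool} (h : ∀ j ∉ S, p j = p' j) :
    Restrict f S p = Restrict f S p' := by
  funext x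
  simp only [Restrict]
  congr 1
  funext j
  split_ifs with hj
  · rfl
  · exact h j hj

theorem restrict_update_of_mem (p : Fin n → Bool) {j : Fin n} (hj : j ∈ S) (v : Bool) :
    Restrict f S (update p j v) = Restrict f S p :=
  restrict_congr f fun _ hk => update_of_ne (ne_of_mem_of_not_mem hj hk).symm v p

theorem not_boolDependsOn_restrict (p : Fin n → Bool) {j : Fin n} (hj : j ∉ S) :
    ¬ BoolDependsOn (Restrict f S p) j := by
  rintro ⟨a, b, hab, hne⟩
  refine hne (congrArg f (funext fun k => ?_))
  split_ifs with hk
  · exact hab k (ne_of_mem_of_not_mem hk hj)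
  · rfl

theorem restrict_insert_update {j : Fin n} (hj : j ∉ S) (c x : Fin n → Bool) (v : Bool) :
    Restrict f (insert j S) c (update x j v) = Restrict f S (update c j v) x := by
  simp only [Restrict]
  congr 1
  funext k
  rcases eq_or_ne k j with rfl | hkj
  · simp [hj]
  · simp [hkj]

theorem exists_restrict_ne (p : Fin n → Bool) {j : Fin n} (hf : BoolDependsOn f j)
    (hj : j ∉ S) : ∃ c, Restrict f S c ≠ Restrict f S p := by
  by_contra! hconst
  have hfp : f = Restrict f S p := funext fun x => by rw [← restrict_self f x, hconst]
  exact not_boolDependsOn_restrict f p hj (hfp ▸ hf)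

end Restrict

namespace IsRelHypercube

variable {n : ℕ} {f : (Fin n → Bool) → Bool} {u : Finset (Fin n)}

theorem insert_of_update_ne {c : Fin n → Bool} (hc : IsRelHypercube f u c) {j : Fin n} (hj : j ∉ u)
    {v : Bool} (hjc : Restrict f u (update c j v) ≠ Restrict f u c) :
    IsRelHypercube f (insert j u) c := by
  intro i hi
  rcases mem_insert.mp hi with rfl | hiu
  · obtain ⟨x, hx⟩ := ne_iff.mp hjc
    refine ⟨update x i v, update x i (c i), fun k hk => by simp [hk], ?_⟩
    rwa [restrict_insert_update f hj, restrict_insert_update f hj, update_eq_self]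
  · obtain ⟨x, y, hxy, hne⟩ := hc i hiu
    refine ⟨update x j (c j), update y j (c j), fun k hk => ?_, ?_⟩
    · rcases eq_or_ne k j with rfl | hkj
      · simp
      · simp [hkj, hxy k hk]
    · rwa [restrict_insert_update f hj, restrict_insert_update f hj, update_eq_self]

theorem exists_insert {p : Fin n → Bool} (hp : IsRelHypercube f u p)
    (hf : ∀ i, BoolDependsOn f i) (hu : u ≠ univ) :
    ∃ j ∉ u, ∃ c, IsRelHypercube f (insert j u) c := by
  obtain ⟨i, hi⟩ : ∃ i, i ∉ u := by simpa [eq_univ_iff_forall] using hu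
  obtain ⟨c₀, hc₀⟩ := exists_restrict_ne f p (hf i) hi
  obtain ⟨c, j, v, hcp, hjc⟩ := exists_update_ne_of_ne (Restrict f u) hc₀.symm
  have hj : j ∉ u := fun hj => hjc (restrict_update_of_mem f c hj v)
  have hc : IsRelHypercube f u c := by
    unfold IsRelHypercube
    rwa [hcp]
  exact ⟨j, hj, c, hc.insert_of_update_ne hj hjc⟩

end IsRelHypercube

/-- Hypercube expansion. -/
theorem stmt2 {n : ℕ} (f : (Fin n → Bool) → Bool) (hf : ∀ i, BoolDependsOn f i)
    (u : Finset (Fin n)) (hu : ∃ p, IsRelHypercube f u p)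
    (q : ℕ) (hq1 : u.card ≤ q) (hq2 : q ≤ n) :
    ∃ w : Finset (Fin n), u ⊆ w ∧ w.card = q ∧ ∃ p, IsRelHypercube f w p := by
  induction q, hq1 using Nat.le_induction with
  | base => exact ⟨u, Subset.refl u, rfl, hu⟩
  | succ q _ ih =>
    obtain ⟨w, huw, hw, p, hp⟩ := ih (Nat.le_of_succ_le hq2)
    have hw_ne : w ≠ univ := fun h => by
      rw [h, card_univ, Fintype.card_fin] at hw
      omega
    obtain ⟨j, hj, c, hc⟩ := hp.exists_insert hf hw_ne
    exact ⟨insert j w, huw.trans (subset_insert j w),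
      by rw [card_insert_of_notMem hj, hw], c, hc⟩
end

section
/- Every singleton subset of the relevant variables of a Boolean function f is stable: for any set w of variables with {x} ⊆ w and any relevance hypercube H for w, there exists a relevance hypercube H' for {x} with H' ⊆ H (i.e., the partial assignment defining H' extends the one defining H). -/
/-
The witnesses `a, b` for the dependence of `f_p` on `x` differ only at `x`. Fixing the
variables of `w \ {x}` to their values in `a` gives a projection of `f` onto `{x}` that
still separates `a` from `b`, and it extends `p` because projections compose.
-/

theorem restrict_restrict {n : ℕ} (f : (Fin n → Bool) → Bool) {S T : Finset (Fin n)}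
    (hTS : T ⊆ S) (p a : Fin n → Bool) :
    Restrict (Restrict f S p) T a = Restrict f T (S.piecewise a p) := by
  funext y
  simp only [Restrict]
  congr 1
  funext j
  by_cases hjT : j ∈ T
  · simp [hjT, hTS hjT]
  · by_cases hjS : j ∈ S <;> simp [hjT, hjS]

theorem BoolDependsOn.exists_restrict_singleton {n : ℕ} {f : (Fin n → Bool) → Bool}
    {i : Fin n} (h : BoolDependsOn f i) :
    ∃ a, BoolDependsOn (Restrict f {i} a) i := by
  obtain ⟨a, b, hab, hne⟩ := h
  have restrict_eq {c : Fin n → Bool} (hc : ∀ j, j ≠ i → a j = c j) :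
      Restrict f {i} a c = f c := by
    simp only [Restrict]
    congr 1
    funext j
    by_cases hj : j = i <;> simp [hj, hc]
  refine ⟨a, a, b, hab, ?_⟩
  rwa [restrict_eq fun _ _ => rfl, restrict_eq hab]

theorem stmt4_general {n : ℕ} (f : (Fin n → Bool) → Bool)
    (x : Fin n) (w : Finset (Fin n)) (hx : x ∈ w)
    (p : Fin n → Bool) (hp : IsRelHypercube f w p) :
    ∃ p' : Fin n → Bool, (∀ j ∉ w, p' j = p j) ∧
      IsRelHypercube f ({x} : Finset (Fin n)) p' := by
  obtain ⟨a, ha⟩ := (hp x hx).exists_restrict_singleton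
  refine ⟨w.piecewise a p, fun j hj => w.piecewise_eq_of_notMem a p hj, ?_⟩
  intro i hi
  rw [Finset.mem_singleton] at hi
  subst hi
  rwa [← restrict_restrict f (Finset.singleton_subset_iff.mpr hx)]

/-- Every singleton subset of the variables of f is stable. -/
theorem stmt4 {n : ℕ} (f : (Fin n → Bool) → Bool) (hf : ∀ i, BoolDependsOn f i)
    (x : Fin n) (w : Finset (Fin n)) (hx : x ∈ w)
    (p : Fin n → Bool) (hp : IsRelHypercube f w p) :
    ∃ p' : Fin n → Bool, (∀ j ∉ w, p' j = p j) ∧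
      IsRelHypercube f ({x} : Finset (Fin n)) p' :=
  stmt4_general f x w hx p hp
end

section
/- Let f : Bool^n → Bool be expressible as f(x) = f₁(x_A) ∘ f₂(x_B) where ∘ ∈ {∧, ∨, ⊕}, A and B partition {1,…,n}, and f₁, f₂ depend on all their respective variables. Then for any variable u ∈ A and any variable v ∈ B, f has a relevance hypercube for {u, v}, and the restriction of f to every such hypercube is similar (up to negating inputs and output) to the two-variable function z₁ ∘ z₂. -/
/-- Similarity of two-variable Boolean functions: equality up to negating
inputs and/or output and permuting the arguments. -/
def Similar2 (F G : Bool → Bool → Bool) : Prop :=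
  ∃ σ σ₁ σ₂ : Bool,
    (∀ a b, F a b = xor σ (G (xor σ₁ a) (xor σ₂ b))) ∨
    (∀ a b, F a b = xor σ (G (xor σ₁ b) (xor σ₂ a)))


/-!
On the plane through `p` spanned by `u` and `v`, `f` equals `op (g₁ a) (g₂ b)` with
`g₁ t = f₁ (update p u t)` and `g₂ t = f₂ (update p v t)`, because `f₁` ignores `v` and `f₂`
ignores `u`. A one-variable Boolean function is constant or of the form `t ↦ c ⊕ t`. Since `∧`, `∨`
and `⊕` depend on both arguments, the plane is a relevance hypercube exactly when `g₁` and `g₂`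
are non-constant, and then `f` on it is `op` with inputs negated by `g₁ false` and `g₂ false`.
Such a `p` exists: on `A` take a point witnessing the relevance of `u` for `f₁`, and on `B` one
witnessing the relevance of `v` for `f₂`.
-/

open Function

def DependsOnFst (G : Bool → Bool → Bool) : Prop :=
  ∃ b, G false b ≠ G true b

def DependsOnSnd (G : Bool → Bool → Bool) : Prop :=
  DependsOnFst (flip G)

lemma Bool.injective_of_apply_ne {α : Type*} {g : Bool → α} {s t : Bool} (h : g s ≠ g t) :
    Injective g :=
  Bool.injective_iff.2 (by cases s <;> cases t <;> simp_all [ne_comm])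

lemma Bool.eq_xor_of_injective {g : Bool → Bool} (hg : Injective g) (t : Bool) :
    g t = xor (g false) t := by
  have := Bool.injective_iff.1 hg
  cases t <;> cases h : g false <;> cases h' : g true <;> simp_all

lemma DependsOnFst.comp {op : Bool → Bool → Bool} {g₁ g₂ : Bool → Bool} (hop : DependsOnFst op)
    (h₁ : Injective g₁) (h₂ : Surjective g₂) : DependsOnFst fun a b => op (g₁ a) (g₂ b) := by
  obtain ⟨b, hb⟩ := hop
  obtain ⟨b, rfl⟩ := h₂ b
  refine ⟨b, ?_⟩
  show op (g₁ false) (g₂ b) ≠ op (g₁ true) (g₂ b)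
  rw [Bool.eq_xor_of_injective h₁ true]
  cases g₁ false
  · exact hb
  · exact hb.symm

lemma DependsOnFst.injective_of_comp {op : Bool → Bool → Bool} {g₁ g₂ : Bool → Bool}
    (h : DependsOnFst fun a b => op (g₁ a) (g₂ b)) : Injective g₁ := by
  obtain ⟨b, hb⟩ := h
  exact Bool.injective_iff.2 fun e => hb (by simp only [e])

lemma DependsOnSnd.comp {op : Bool → Bool → Bool} {g₁ g₂ : Bool → Bool} (hop : DependsOnSnd op)
    (h₁ : Surjective g₁) (h₂ : Injective g₂) : DependsOnSnd fun a b => op (g₁ a) (g₂ b) :=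
  DependsOnFst.comp (op := flip op) hop h₂ h₁

lemma DependsOnSnd.injective_of_comp {op : Bool → Bool → Bool} {g₁ g₂ : Bool → Bool}
    (h : DependsOnSnd fun a b => op (g₁ a) (g₂ b)) : Injective g₂ :=
  DependsOnFst.injective_of_comp (op := flip op) h

lemma similar2_comp (op : Bool → Bool → Bool) {g₁ g₂ : Bool → Bool}
    (h₁ : Injective g₁) (h₂ : Injective g₂) : Similar2 (fun a b => op (g₁ a) (g₂ b)) op :=
  ⟨false, g₁ false, g₂ false, Or.inl fun a b => by
    rw [Bool.false_xor, ← Bool.eq_xor_of_injective h₁, ← Bool.eq_xor_of_injective h₂]⟩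

lemma boolDependsOn_iff_exists_update {ι : Type*} [DecidableEq ι] {f : (ι → Bool) → Bool}
    {i : ι} : BoolDependsOn f i ↔ ∃ a, Injective fun t => f (update a i t) := by
  constructor
  · rintro ⟨a, b, hab, hne⟩
    have hb : b = update a i (b i) := by
      ext j
      rcases eq_or_ne j i with rfl | hj
      · simp
      · simp [hj, hab j hj]
    rw [hb, ← update_eq_self i a, update_idem] at hne
    exact ⟨a, Bool.injective_of_apply_ne (g := fun t => f (update a i t)) hne⟩
  · rintro ⟨a, ha⟩
    exact ⟨_, _, fun j hj => by simp [hj], Bool.injective_iff.1 ha⟩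

lemma boolDependsOn_iff_of_eq_pair {ι : Type*} [DecidableEq ι] {g : (ι → Bool) → Bool}
    {G : Bool → Bool → Bool} {u v : ι} (huv : u ≠ v) (hg : ∀ x, g x = G (x u) (x v)) :
    BoolDependsOn g u ↔ DependsOnFst G := by
  simp only [boolDependsOn_iff_exists_update, Bool.injective_iff, hg, update_self,
    update_of_ne huv.symm]
  exact ⟨fun ⟨a, ha⟩ => ⟨a v, ha⟩, fun ⟨b, hb⟩ => ⟨fun _ => b, hb⟩⟩

lemma restrict_pair_apply {n : ℕ} (f : (Fin n → Bool) → Bool) (u v : Fin n)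
    (p x : Fin n → Bool) :
    Restrict f {u, v} p x = f (update (update p v (x v)) u (x u)) := by
  unfold Restrict
  congr 1
  ext j
  rcases eq_or_ne j u with rfl | hju
  · simp
  rcases eq_or_ne j v with rfl | hjv
  · simp [hju]
  · simp [hju, hjv]

lemma isRelHypercube_pair_iff {n : ℕ} {f : (Fin n → Bool) → Bool} {u v : Fin n} (huv : u ≠ v)
    (p : Fin n → Bool) :
    IsRelHypercube f {u, v} p ↔
      DependsOnFst (fun a b => f (update (update p v b) u a)) ∧
        DependsOnSnd (fun a b => f (update (update p v b) u a)) := by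
  simp only [IsRelHypercube, Finset.mem_insert, Finset.mem_singleton, forall_eq_or_imp, forall_eq]
  rw [boolDependsOn_iff_of_eq_pair huv (G := fun a b => f (update (update p v b) u a))
      (restrict_pair_apply f u v p),
    boolDependsOn_iff_of_eq_pair huv.symm
      (G := flip fun a b => f (update (update p v b) u a)) (restrict_pair_apply f u v p)]
  rfl

lemma apply_update_update_eq_op {ι : Type*} [DecidableEq ι] {f f₁ f₂ : (ι → Bool) → Bool}
    {A B : Finset ι} {op : Bool → Bool → Bool}
    (h1only : ∀ x y, (∀ i ∈ A, x i = y i) → f₁ x = f₁ y)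
    (h2only : ∀ x y, (∀ i ∈ B, x i = y i) → f₂ x = f₂ y)
    (hf : ∀ x, f x = op (f₁ x) (f₂ x)) {u v : ι} (hu : u ∉ B) (hv : v ∉ A)
    (p : ι → Bool) (a b : Bool) :
    f (update (update p v b) u a) = op (f₁ (update p u a)) (f₂ (update p v b)) := by
  rw [hf]
  congr 1
  · refine h1only _ _ fun i hi => ?_
    rcases eq_or_ne i u with rfl | hiu
    · simp
    · simp [hiu, ne_of_mem_of_not_mem hi hv]
  · refine h2only _ _ fun i hi => ?_
    rw [update_of_ne (ne_of_mem_of_not_mem hi hu)]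

lemma ite_ite_eq_update_update {ι : Type*} [DecidableEq ι] (p : ι → Bool) (u v : ι) (a b : Bool) :
    (fun j => if j = u then a else if j = v then b else p j) = update (update p v b) u a := by
  ext j
  simp only [update_apply]

theorem stmt12_general {n : ℕ} (f f₁ f₂ : (Fin n → Bool) → Bool)
    (A B : Finset (Fin n)) (hAB : Disjoint A B)
    (op : Bool → Bool → Bool) (hop : op = and ∨ op = or ∨ op = xor)
    (h1only : ∀ x y, (∀ i ∈ A, x i = y i) → f₁ x = f₁ y)
    (h2only : ∀ x y, (∀ i ∈ B, x i = y i) → f₂ x = f₂ y)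
    (h1dep : ∀ i ∈ A, BoolDependsOn f₁ i) (h2dep : ∀ i ∈ B, BoolDependsOn f₂ i)
    (hf : ∀ x, f x = op (f₁ x) (f₂ x))
    (u v : Fin n) (hu : u ∈ A) (hv : v ∈ B) :
    (∃ p, IsRelHypercube f ({u, v} : Finset (Fin n)) p) ∧
    ∀ p : Fin n → Bool, IsRelHypercube f ({u, v} : Finset (Fin n)) p →
      Similar2 (fun a b => f fun j => if j = u then a else if j = v then b else p j)
        op := by
  have hF := apply_update_update_eq_op h1only h2only hf (Finset.disjoint_left.1 hAB hu)
    (Finset.disjoint_right.1 hAB hv)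
  have huv : u ≠ v := ne_of_mem_of_not_mem hu (Finset.disjoint_right.1 hAB hv)
  refine ⟨?_, fun p hp => ?_⟩
  · obtain ⟨a₁, h₁⟩ := boolDependsOn_iff_exists_update.1 (h1dep u hu)
    obtain ⟨a₂, h₂⟩ := boolDependsOn_iff_exists_update.1 (h2dep v hv)
    let p : Fin n → Bool := fun j => if j ∈ A then a₁ j else a₂ j
    have hp₁ : ∀ t, f₁ (update p u t) = f₁ (update a₁ u t) :=
      fun t => h1only _ _ fun i hi => by simp [p, update_apply, hi]
    have hp₂ : ∀ t, f₂ (update p v t) = f₂ (update a₂ v t) :=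
      fun t => h2only _ _ fun i hi => by simp [p, update_apply, Finset.disjoint_right.1 hAB hi]
    have hop_dep : DependsOnFst op ∧ DependsOnSnd op := by
      rcases hop with rfl | rfl | rfl <;> simp only [DependsOnSnd, DependsOnFst, flip] <;> decide
    refine ⟨p, (isRelHypercube_pair_iff huv p).2 ?_⟩
    simp only [hF, hp₁, hp₂]
    exact ⟨hop_dep.1.comp h₁ h₂.bijective_of_finite.2,
      hop_dep.2.comp h₁.bijective_of_finite.2 h₂⟩
  · rw [isRelHypercube_pair_iff huv] at hp
    simp only [hF] at hp
    simp only [ite_ite_eq_update_update, hF]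
    exact similar2_comp op hp.1.injective_of_comp hp.2.injective_of_comp

theorem stmt12 {n : ℕ} (f f₁ f₂ : (Fin n → Bool) → Bool)
    (A B : Finset (Fin n)) (hAB : Disjoint A B) (hABu : A ∪ B = Finset.univ)
    (op : Bool → Bool → Bool) (hop : op = and ∨ op = or ∨ op = xor)
    (h1only : ∀ x y, (∀ i ∈ A, x i = y i) → f₁ x = f₁ y)
    (h2only : ∀ x y, (∀ i ∈ B, x i = y i) → f₂ x = f₂ y)
    (h1dep : ∀ i ∈ A, BoolDependsOn f₁ i) (h2dep : ∀ i ∈ B, BoolDependsOn f₂ i)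
    (hf : ∀ x, f x = op (f₁ x) (f₂ x))
    (u v : Fin n) (hu : u ∈ A) (hv : v ∈ B) :
    (∃ p, IsRelHypercube f ({u, v} : Finset (Fin n)) p) ∧
    ∀ p : Fin n → Bool, IsRelHypercube f ({u, v} : Finset (Fin n)) p →
      Similar2 (fun a b => f fun j => if j = u then a else if j = v then b else p j)
        op :=
  stmt12_general f f₁ f₂ A B hAB op hop h1only h2only h1dep h2dep hf u v hu hv
end
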